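/- Let r ≤ n, let N ∈ ℝ^{n×r}, let w_1,…,w_r > 0 with Λ_w = diag(w_1,…,w_r), and set Ξ = C^{-1/2} N Λ_w ∈ ℝ^{n×r}. Let ξ_1,…,ξ_r ≥ 0 denote the singular values of Ξ, i.e. the square roots of the eigenvalues of Ξᵀ Ξ. Then for every a ∈ ℝ^{n×r} with aᵀ Σ a = I_r, tr(aᵀ Λ_σ N Λ_w) ≤ Σ_{i=1}^r ξ_i. -/

import Mathlib

/-!
Put `b = C^{1/2} Λ_σ a`. Since `Σ = Λ_σ C Λ_σ`, the constraint `aᵀ Σ a = I` says `bᵀ b = I`,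
and `tr(aᵀ Λ_σ N Λ_w) = tr(bᵀ Ξ)`. Replacing `b, Ξ` by `b U, Ξ U` for an orthogonal `U`
diagonalising `Ξᵀ Ξ` changes neither, and then Cauchy–Schwarz on the `j`-th columns bounds the
`j`-th diagonal entry of `bᵀ Ξ` by `√((Ξ U)ᵀ (Ξ U))_{jj} = ξ_j`.
-/

open Matrix BigOperators

section
open scoped ComplexOrder

/-- The positive semidefinite square root of a positive semidefinite matrix
(Mathlib's former `Matrix.PosSemidef.sqrt`, removed upstream; restored with its old definition). -/
noncomputable def Matrix.PosSemidef.sqrt {n 𝕜 : Type*} [Fintype n] [RCLike 𝕜] [DecidableEq n]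
    {A : Matrix n n 𝕜} (hA : A.PosSemidef) : Matrix n n 𝕜 :=
  (hA.1.eigenvectorUnitary : Matrix n n 𝕜) * diagonal ((↑) ∘ (Real.sqrt ∘ hA.1.eigenvalues)) *
    (star hA.1.eigenvectorUnitary : Matrix n n 𝕜)

end

namespace Matrix

open scoped ComplexOrder

variable {m n : Type*} [Fintype m] [Fintype n]

namespace PosSemidef

variable {𝕜 : Type*} [RCLike 𝕜] [DecidableEq n] {A : Matrix n n 𝕜}

lemma isHermitian_sqrt (hA : A.PosSemidef) : hA.sqrt.IsHermitian := by
  refine isHermitian_mul_mul_conjTranspose _ (isHermitian_diagonal_iff.mpr fun i => ?_)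
  simp [isSelfAdjoint_iff]

lemma sqrt_mul_sqrt (hA : A.PosSemidef) : hA.sqrt * hA.sqrt = A := by
  conv_rhs => rw [hA.1.spectral_theorem]
  have hdiag : diagonal (((↑) : ℝ → 𝕜) ∘ (Real.sqrt ∘ hA.1.eigenvalues)) *
      diagonal ((↑) ∘ (Real.sqrt ∘ hA.1.eigenvalues)) = diagonal ((↑) ∘ hA.1.eigenvalues) := by
    rw [diagonal_mul_diagonal]
    congr 1
    funext i
    simp [← RCLike.ofReal_mul, Real.mul_self_sqrt (hA.eigenvalues_nonneg i)]
  simp only [sqrt, Unitary.conjStarAlgAut_apply, Matrix.mul_assoc]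
  rw [← Matrix.mul_assoc (star _) _, Unitary.coe_star_mul_self, Matrix.one_mul,
    ← Matrix.mul_assoc (diagonal _), hdiag]

end PosSemidef

lemma trace_transpose_mul_le_sum_sqrt_diag [DecidableEq n] (b X : Matrix m n ℝ)
    (hb : bᵀ * b = 1) :
    (bᵀ * X).trace ≤ ∑ j, √((Xᵀ * X) j j) := by
  refine Finset.sum_le_sum fun j _ => ?_
  have hbj : ∑ k, b k j * b k j = 1 := by
    simpa [mul_apply] using congr_fun₂ hb j j
  have := Real.sum_mul_le_sqrt_mul_sqrt Finset.univ (b · j) (X · j)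
  simp only [sq, hbj, Real.sqrt_one, one_mul] at this
  simpa [mul_apply] using this

lemma trace_transpose_mul_le_sum_sqrt_eigenvalues [DecidableEq n] (b X : Matrix m n ℝ)
    (hb : bᵀ * b = 1) (hX : (Xᵀ * X).IsHermitian) :
    (bᵀ * X).trace ≤ ∑ j, √(hX.eigenvalues j) := by
  set U : Matrix n n ℝ := (hX.eigenvectorUnitary : Matrix n n ℝ)
  have hUUt : U * Uᵀ = 1 := Unitary.coe_mul_star_self hX.eigenvectorUnitary
  have hUtU : Uᵀ * U = 1 := Unitary.coe_star_mul_self hX.eigenvectorUnitary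
  have hXU : (X * U)ᵀ * (X * U) = diagonal hX.eigenvalues := by
    have := hX.conjStarAlgAut_star_eigenvectorUnitary
    rw [Unitary.conjStarAlgAut_star_apply] at this
    rw [transpose_mul, ← Matrix.mul_assoc, Matrix.mul_assoc _ Xᵀ]
    exact this
  have hbU : (b * U)ᵀ * (b * U) = 1 := by
    rw [transpose_mul, Matrix.mul_assoc, ← Matrix.mul_assoc bᵀ, hb, Matrix.one_mul, hUtU]
  have htrace : ((b * U)ᵀ * (X * U)).trace = (bᵀ * X).trace := by
    rw [transpose_mul, Matrix.mul_assoc, trace_mul_comm, Matrix.mul_assoc, Matrix.mul_assoc, hUUt,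
      Matrix.mul_one]
  calc (bᵀ * X).trace = ((b * U)ᵀ * (X * U)).trace := htrace.symm
    _ ≤ ∑ j, √(((X * U)ᵀ * (X * U)) j j) := trace_transpose_mul_le_sum_sqrt_diag _ _ hbU
    _ = ∑ j, √(hX.eigenvalues j) := by simp only [hXU, diagonal_apply_eq]

end Matrix

theorem stmt_7_general {n r : ℕ}
    (S : Matrix (Fin n) (Fin n) ℝ) (hS : S.PosDef)
    (Ls : Matrix (Fin n) (Fin n) ℝ)
    (hLs : Ls = Matrix.diagonal (fun i => Real.sqrt (S i i)))
    (C : Matrix (Fin n) (Fin n) ℝ) (hC : C = Ls⁻¹ * S * Ls⁻¹)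
    (hCpd : C.PosDef)
    (N : Matrix (Fin n) (Fin r) ℝ)
    (Lw : Matrix (Fin r) (Fin r) ℝ)
    (Xi : Matrix (Fin n) (Fin r) ℝ)
    (hXi : Xi = (hCpd.posSemidef.sqrt)⁻¹ * N * Lw)
    (hXh : (Xiᵀ * Xi).IsHermitian)
    (a : Matrix (Fin n) (Fin r) ℝ) (ha : aᵀ * S * a = 1) :
    (aᵀ * Ls * N * Lw).trace ≤ ∑ i, Real.sqrt (hXh.eigenvalues i) := by
  set R := hCpd.posSemidef.sqrt
  have hLs_det : IsUnit Ls.det := by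
    rw [hLs, det_diagonal]
    exact (Finset.prod_pos fun i _ => Real.sqrt_pos.mpr (hS.diag_pos)).ne'.isUnit
  have hLsT : Lsᵀ = Ls := hLs ▸ diagonal_transpose _
  have hS_eq : S = Ls * C * Ls := by
    simp only [hC, Matrix.mul_assoc]
    rw [nonsing_inv_mul _ hLs_det, Matrix.mul_one, mul_nonsing_inv_cancel_left _ _ hLs_det]
  have hRT : Rᵀ = R := hCpd.posSemidef.isHermitian_sqrt
  have hRR : R * R = C := hCpd.posSemidef.sqrt_mul_sqrt
  have hR_det : IsUnit R.det :=
    (isUnit_iff_isUnit_det R).mp (isUnit_mul_self_iff.mp (hRR ▸ hCpd.isUnit))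
  have hb : (R * Ls * a)ᵀ * (R * Ls * a) = 1 := by
    rw [transpose_mul, transpose_mul, hRT, hLsT, ← ha, hS_eq, ← hRR]
    simp only [Matrix.mul_assoc]
  have hbXi : (R * Ls * a)ᵀ * Xi = aᵀ * Ls * N * Lw := by
    rw [hXi, transpose_mul, transpose_mul, hRT, hLsT]
    simp only [Matrix.mul_assoc]
    rw [mul_nonsing_inv_cancel_left _ _ hR_det]
  rw [← hbXi]
  exact trace_transpose_mul_le_sum_sqrt_eigenvalues _ _ hb hXh

/-- **Proxy-VAR OASIS upper bound.** With `Ξ = C^{-1/2} N Λ_w` and singular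
values `ξ_i` (square roots of the eigenvalues of `Ξᵀ Ξ`), every `a` with
`aᵀ Σ a = I_r` satisfies `tr(aᵀ Λ_σ N Λ_w) ≤ Σ_i ξ_i`. -/
theorem stmt_7 {n r : ℕ} (hr : r ≤ n)
    (S : Matrix (Fin n) (Fin n) ℝ) (hS : S.PosDef)
    (Ls : Matrix (Fin n) (Fin n) ℝ)
    (hLs : Ls = Matrix.diagonal (fun i => Real.sqrt (S i i)))
    (C : Matrix (Fin n) (Fin n) ℝ) (hC : C = Ls⁻¹ * S * Ls⁻¹)
    (hCpd : C.PosDef)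
    (N : Matrix (Fin n) (Fin r) ℝ)
    (w : Fin r → ℝ) (hw : ∀ i, 0 < w i)
    (Lw : Matrix (Fin r) (Fin r) ℝ) (hLw : Lw = Matrix.diagonal w)
    (Xi : Matrix (Fin n) (Fin r) ℝ)
    (hXi : Xi = (hCpd.posSemidef.sqrt)⁻¹ * N * Lw)
    (hXh : (Xiᵀ * Xi).IsHermitian)
    (a : Matrix (Fin n) (Fin r) ℝ) (ha : aᵀ * S * a = 1) :
    (aᵀ * Ls * N * Lw).trace ≤ ∑ i, Real.sqrt (hXh.eigenvalues i) :=
  stmt_7_general S hS Ls hLs C hC hCpd N Lw Xi hXi hXh a ha
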